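/- Let k be a positive integer and for each positive integer N let E_N = ∑_{p ∈ P_k} (E_N)_p · p be an element of the partition algebra ℂ[P_k(N)]. Define the cumulants κ_p(E_N) = N^{nc(p) − nc(p∨id_k)} (E_N)_p and the moments m_p(E_N) = Tr_N(E_N · ᵗp) / N^{nc(p∨id_k)}, where the product is taken in ℂ[P_k(N)] (so m_p(E_N) = ∑_{p'} (E_N)_{p'} N^{nc(p∨p') − nc(p∨id_k)}). Then the following are equivalent: (i) for every p ∈ P_k, m_p(E_N) converges as N → ∞; (ii) for every p ∈ P_k, κ_p(E_N) converges as N → ∞. In that case, denoting the limits m_p(E) and κ_p(E), for every p ∈ P_k one has m_p(E) = ∑_{p' ≤ p} κ_{p'}(E), the sum being over p' ∈ P_k with p' ≤ p in the geodesic order. -/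

import Mathlib

open Sum
open scoped Classical

noncomputable section

namespace PartitionPaper

variable {X : Type*}

/-- The number of blocks of a partition of `X`, encoded as a setoid on `X`. -/
def nc (p : Setoid X) : ℕ := Nat.card (Quotient p)

/-- The geodesic distance `d(p,p') = (nc p + nc p')/2 - nc (p ⊔ p')`. -/
def pdist (p q : Setoid X) : ℚ :=
  ((nc p : ℚ) + (nc q : ℚ)) / 2 - (nc (p ⊔ q) : ℚ)

/-- Geodesic order with base partition `b` : `p' ≤_b p`. -/
def geoLE (b p' p : Setoid X) : Prop := pdist b p' + pdist p' p = pdist b p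

/-- Coarser-compatible order `p' ⊣_b p` : `p'` coarser than `p` and
`nc (p' ⊔ b) = nc (p ⊔ b)`.  (In the setoid lattice, `p ≤ p'` means `p` is finer.) -/
def coarserComp (b p' p : Setoid X) : Prop :=
  p ≤ p' ∧ nc (p' ⊔ b) = nc (p ⊔ b)

/-- Finer-compatible order `p' ⊐_b p` : `p'` finer than `p` and
`nc p' - nc (p' ⊔ b) = nc p - nc (p ⊔ b)`. -/
def finerComp (b p' p : Setoid X) : Prop :=
  p' ≤ p ∧ (nc p' : ℤ) - (nc (p' ⊔ b) : ℤ) = (nc p : ℤ) - (nc (p ⊔ b) : ℤ)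

/-- `p'` is obtained from `p` by gluing two blocks of `p` into one. -/
def IsGluing (p p' : Setoid X) : Prop := p ≤ p' ∧ nc p' + 1 = nc p

/-- The Cayley graph on partitions of `X`: an edge iff one partition is obtained
from the other by gluing two of its blocks into one. -/
def glueGraph (X : Type*) : SimpleGraph (Setoid X) where
  Adj p q := IsGluing p q ∨ IsGluing q p
  symm := ⟨fun _ _ h => h.elim Or.inr Or.inl⟩
  loopless := ⟨by
    intro p h
    rcases h with ⟨-, h⟩ | ⟨-, h⟩ <;> omega⟩

/-- The segment `[p₁, p₂]` for the geodesic distance. -/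
def seg (p₁ p₂ : Setoid X) : Set (Setoid X) :=
  {p | pdist p₁ p + pdist p p₂ = pdist p₁ p₂}

/-- The defect of `p'` from being on `[b, p]`. -/
def df (b p' p : Setoid X) : ℚ := pdist b p' + pdist p' p - pdist b p

/-- Admissible one-step splits: `p'` is obtained by cutting a (pivotal) block of `p`
into two blocks in such a way that the join with `b` gains one block. -/
def Delta (b p : Setoid X) : Set (Setoid X) :=
  {p' | p' ≤ p ∧ nc p' = nc p + 1 ∧ nc (p' ⊔ b) = nc (p ⊔ b) + 1}

/-- The admissible splits `Sp_b(p) = ⋃ₘ Δ_b^m(p)`. -/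
def Sp (b p : Setoid X) : Set (Setoid X) :=
  {p' | Relation.ReflTransGen (fun u v => v ∈ Delta b u) p p'}

/-- The admissible gluings `Gl_b(p)`: partitions obtained by gluing blocks of `p`
without altering the number of blocks of the join with `b`. -/
def Gl (b p : Setoid X) : Set (Setoid X) :=
  {p' | p ≤ p' ∧ nc (p' ⊔ b) = nc (p ⊔ b)}

/-- `p'` is directly smaller than `p` for the relation `r`. -/
def DirectlySmaller (r : Setoid X → Setoid X → Prop) (p' p : Setoid X) : Prop :=
  r p' p ∧ p' ≠ p ∧ ¬ ∃ p'', p'' ≠ p ∧ p'' ≠ p' ∧ r p' p'' ∧ r p'' p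

/-- The block of the partition `p` corresponding to a class `c`. -/
def blockSet (p : Setoid X) (c : Quotient p) : Set X := {x | Quotient.mk p x = c}

/-- The number of blocks of `q` contained in the block `c` of `p`. -/
def numSubBlocks (q p : Setoid X) (c : Quotient p) : ℕ :=
  Nat.card {d : Quotient q // blockSet q d ⊆ blockSet p c}

/-- The number of blocks of `p` containing exactly `i` blocks of `q`. -/
def rcount (q p : Setoid X) (i : ℕ) : ℕ :=
  Nat.card {c : Quotient p // numSubBlocks q p c = i}

/-- The Möbius function of the refinement order:
`μ_f(q,p) = (-1)^(nc q - nc p) ∏_i ((i-1)!)^(r_i)` for `q` finer than `p`. -/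
def muf (q p : Setoid X) : ℤ :=
  (-1) ^ (nc q - nc p) *
    ∏ i ∈ Finset.range (nc q + 1), ((Nat.factorial (i - 1) : ℤ)) ^ (rcount q p i)

/-- `P_k`: partitions of `{1,…,k} ∪ {1',…,k'}`, the left summand being the
unprimed (top) row and the right summand the primed (bottom) row. -/
abbrev Pk (k : ℕ) := Setoid (Fin k ⊕ Fin k)

/-- The identity partition `id_k = {{i, i'} : 1 ≤ i ≤ k}`. -/
def idk (k : ℕ) : Pk k := Setoid.ker (Sum.elim id id)

/-- The permutation partition associated with `σ`, with blocks `{i, σ(i)'}`. -/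
def permPartition {k : ℕ} (σ : Equiv.Perm (Fin k)) : Pk k :=
  Setoid.ker (Sum.elim id σ.symm)

/-- `S_k`, the set of permutation partitions. -/
def Sk (k : ℕ) : Set (Pk k) := Set.range (permPartition (k := k))

/-- `B_k`, the set of Brauer partitions: all blocks have exactly two elements. -/
def Bk (k : ℕ) : Set (Pk k) := {p | ∀ x, Nat.card {y | p.r x y} = 2}

/-- Embedding of the top/bottom rows of the upper diagram `q` into the
three-row diagram (top ⊕ (middle ⊕ bottom)). -/
def upMap (k : ℕ) : Fin k ⊕ Fin k → Fin k ⊕ (Fin k ⊕ Fin k) :=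
  Sum.elim Sum.inl (fun i => Sum.inr (Sum.inl i))

/-- Embedding of the top/bottom rows of the lower diagram `p` into the
three-row diagram. -/
def downMap (k : ℕ) : Fin k ⊕ Fin k → Fin k ⊕ (Fin k ⊕ Fin k) :=
  Sum.elim (fun i => Sum.inr (Sum.inl i)) (fun i => Sum.inr (Sum.inr i))

/-- The partition of the three-row diagram obtained by stacking a diagram of `q`
on top of a diagram of `p` (identifying the bottom row of `q` with the top row
of `p`): the equivalence relation generated by the copies of `q` and `p`. -/
def stackSetoid {k : ℕ} (p q : Pk k) : Setoid (Fin k ⊕ (Fin k ⊕ Fin k)) :=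
  sInf {s | ∀ x y,
    ((∃ a b, upMap k a = x ∧ upMap k b = y ∧ q.r a b) ∨
     (∃ a b, downMap k a = x ∧ downMap k b = y ∧ p.r a b)) → s.r x y}

/-- The composition `p ∘ q` (a diagram of `q` stacked above a diagram of `p`),
obtained by restricting the stacked partition to the outer rows. -/
def comp {k : ℕ} (p q : Pk k) : Pk k :=
  Setoid.comap (Sum.elim Sum.inl (fun i => Sum.inr (Sum.inr i))) (stackSetoid p q)

/-- `κ(p,q)`: the number of connected components of the stacked diagram entirely
contained in the middle row. -/
def kappaP {k : ℕ} (p q : Pk k) : ℕ :=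
  Nat.card {c : Quotient (stackSetoid p q) //
    ∀ x, Quotient.mk (stackSetoid p q) x = c → ∃ i : Fin k, x = Sum.inr (Sum.inl i)}

/-- The transpose `ᵗp`, exchanging the two rows. -/
def transpose {k : ℕ} (p : Pk k) : Pk k := Setoid.comap Sum.swap p

/-- The disjoint-union partition on a sum type. -/
def sumSetoid {α β : Type*} (p : Setoid α) (q : Setoid β) : Setoid (α ⊕ β) :=
  Setoid.ker (Sum.map (Quotient.mk p) (Quotient.mk q))

/-- Reindexing of the rows for the tensor product. -/
def reindex (k l : ℕ) :
    Fin (k + l) ⊕ Fin (k + l) → (Fin k ⊕ Fin k) ⊕ (Fin l ⊕ Fin l) :=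
  Sum.elim
    (fun j => Sum.elim (fun a => Sum.inl (Sum.inl a)) (fun b => Sum.inr (Sum.inl b))
      (finSumFinEquiv.symm j))
    (fun j => Sum.elim (fun a => Sum.inl (Sum.inr a)) (fun b => Sum.inr (Sum.inr b))
      (finSumFinEquiv.symm j))

/-- The tensor product `p ⊗ q ∈ P_{k+l}`: a diagram of `p` placed to the left of
a diagram of `q`. -/
def tensor {k l : ℕ} (p : Pk k) (q : Pk l) : Pk (k + l) :=
  Setoid.comap (reindex k l) (sumSetoid p q)

/-- The `≺`-defect `η(p,q)`. -/
def eta {k : ℕ} (p q : Pk k) : ℚ :=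
  pdist (idk k) p + pdist (idk k) q - pdist (idk k) (comp p q)
    - ((k : ℚ) + (nc (comp p q) : ℚ) - (nc p : ℚ) - (nc q : ℚ)) / 2 - (kappaP p q : ℚ)

/-- The Kreweras complement of `p'` in `p`: the set of `p''` with `p = p' ∘ p''`
realizing equality in the `≺`-defect inequality. -/
def Krew {k : ℕ} (p p' : Pk k) : Set (Pk k) :=
  {p'' | comp p' p'' = p ∧ eta p' p'' = 0}

/-- `p' ≺ p` : `p'` is an admissible prefix of `p`. -/
def prec {k : ℕ} (p' p : Pk k) : Prop :=
  ∃ p'', comp p' p'' = p ∧ eta p' p'' = 0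

/-- The partition of `{1,…,k}` into the orbits (cycles) of the permutation `σ`. -/
def cycleSetoid {k : ℕ} (σ : Equiv.Perm (Fin k)) : Setoid (Fin k) :=
  ⟨σ.SameCycle,
    ⟨fun x => Equiv.Perm.SameCycle.refl σ x, fun h => h.symm, fun h₁ h₂ => h₁.trans h₂⟩⟩

/-- A partition of `{1,…,k}` is non-crossing if there are no `a < b < c < d` with
`a, c` in one block and `b, d` in a different block. -/
def NonCrossing {k : ℕ} (π : Setoid (Fin k)) : Prop :=
  ¬ ∃ a b c d : Fin k, a < b ∧ b < c ∧ c < d ∧ π.r a c ∧ π.r b d ∧ ¬ π.r a b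

/-- The map sending a permutation partition to the partition of `{1,…,k}` into
the orbits of the corresponding bijection (the blocks of `p ⊔ id_k` restricted
to the top row). -/
def orbitMap {k : ℕ} (p : Pk k) : Setoid (Fin k) :=
  Setoid.comap (Sum.inl : Fin k → Fin k ⊕ Fin k) (p ⊔ idk k)

/-- The permutation `(1,k+1)(2,k+2)⋯(k,2k)` of `{1,…,2k}`. -/
def tauPerm (k : ℕ) : Equiv.Perm (Fin (k + k)) :=
  (finSumFinEquiv.symm.trans (Equiv.sumComm (Fin k) (Fin k))).trans finSumFinEquiv

/-- The left part of a partition in `P_{k₁+k₂}`. -/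
def leftPart {k₁ k₂ : ℕ} (p : Pk (k₁ + k₂)) : Pk k₁ :=
  Setoid.comap (Sum.map (Fin.castAdd k₂) (Fin.castAdd k₂)) p

/-- The right part of a partition in `P_{k₁+k₂}`. -/
def rightPart {k₁ k₂ : ℕ} (p : Pk (k₁ + k₂)) : Pk k₂ :=
  Setoid.comap (Sum.map (Fin.natAdd k₁) (Fin.natAdd k₁)) p

/-- The `p`-moment `m_p(E_N) = Tr_N(E_N ᵗp)/N^{nc(p ⊔ id_k)}
`= ∑_{p'} (E_N)_{p'} N^{nc(p ⊔ p') - nc(p ⊔ id_k)}`. -/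
def momentF {k : ℕ} (E : ℕ → Pk k → ℂ) (p : Pk k) (N : ℕ) : ℂ :=
  ∑ᶠ p' : Pk k, E N p' * (N : ℂ) ^ ((nc (p ⊔ p') : ℤ) - (nc (p ⊔ idk k) : ℤ))

/-- The `p`-cumulant `κ_p(E_N) = N^{nc p - nc (p ⊔ id_k)} (E_N)_p`. -/
def cumulantF {k : ℕ} (E : ℕ → Pk k → ℂ) (p : Pk k) (N : ℕ) : ℂ :=
  (N : ℂ) ^ ((nc p : ℤ) - (nc (p ⊔ idk k) : ℤ)) * E N p

/-! ### Auxiliary lemmas -/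

section NcAux

variable {Y : Type*} [Finite Y]

private def quotMap {s t : Setoid Y} (h : s ≤ t) : Quotient s → Quotient t :=
  Quotient.lift (Quotient.mk t) fun _ _ hab => Quotient.sound (Setoid.le_def.mp h hab)

private lemma quotMap_surjective {s t : Setoid Y} (h : s ≤ t) :
    Function.Surjective (quotMap h) := fun d =>
  Quotient.inductionOn d fun a => ⟨Quotient.mk s a, rfl⟩

lemma nc_anti {s t : Setoid Y} (h : s ≤ t) : nc t ≤ nc s :=
  Nat.card_le_card_of_surjective _ (quotMap_surjective h)

lemma eq_of_le_of_nc_le {s t : Setoid Y} (h : s ≤ t) (hc : nc s ≤ nc t) : s = t := by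
  have hbij : Function.Bijective (quotMap h) :=
    (quotMap_surjective h).bijective_of_nat_card_le hc
  refine le_antisymm h (Setoid.le_def.mpr ?_)
  intro a b hab
  have : Quotient.mk s a = Quotient.mk s b := by
    apply hbij.1
    show Quotient.mk t a = Quotient.mk t b
    exact Quotient.sound hab
  exact Quotient.exact this

/-- Merging the blocks of `u` and `v` in `s`. -/
private def mrg (s : Setoid Y) (u v : Y) : Setoid Y :=
  ⟨fun a b => s a b ∨ (s a u ∧ s v b) ∨ (s a v ∧ s u b), by
    constructor
    · exact fun a => Or.inl (s.refl a)
    · rintro a b (h | ⟨h1, h2⟩ | ⟨h1, h2⟩)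
      · exact Or.inl (s.symm h)
      · exact Or.inr (Or.inr ⟨s.symm h2, s.symm h1⟩)
      · exact Or.inr (Or.inl ⟨s.symm h2, s.symm h1⟩)
    · rintro a b c (h | ⟨h1, h2⟩ | ⟨h1, h2⟩) (h' | ⟨h1', h2'⟩ | ⟨h1', h2'⟩)
      · exact Or.inl (s.trans h h')
      · exact Or.inr (Or.inl ⟨s.trans h h1', h2'⟩)
      · exact Or.inr (Or.inr ⟨s.trans h h1', h2'⟩)
      · exact Or.inr (Or.inl ⟨h1, s.trans h2 h'⟩)
      · exact Or.inl (s.trans h1 (s.trans (s.symm (s.trans h2 h1')) h2'))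
      · exact Or.inl (s.trans h1 h2')
      · exact Or.inr (Or.inr ⟨h1, s.trans h2 h'⟩)
      · exact Or.inl (s.trans h1 h2')
      · exact Or.inl (s.trans h1 (s.trans (s.symm (s.trans h2 h1')) h2'))⟩

private lemma mrg_rel {s : Setoid Y} {u v a b : Y} :
    (mrg s u v) a b ↔ s a b ∨ (s a u ∧ s v b) ∨ (s a v ∧ s u b) := Iff.rfl

private lemma le_mrg (s : Setoid Y) (u v : Y) : s ≤ mrg s u v :=
  Setoid.le_def.mpr fun h => Or.inl h

private lemma mrg_rel_uv (s : Setoid Y) (u v : Y) : (mrg s u v) u v :=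
  Or.inr (Or.inl ⟨s.refl u, s.refl v⟩)

private lemma mrg_le {s t : Setoid Y} (h : s ≤ t) {u v : Y} (huv : t u v) :
    mrg s u v ≤ t := by
  refine Setoid.le_def.mpr ?_
  rintro a b (hab | ⟨h1, h2⟩ | ⟨h1, h2⟩)
  · exact Setoid.le_def.mp h hab
  · exact t.trans (Setoid.le_def.mp h h1) (t.trans huv (Setoid.le_def.mp h h2))
  · exact t.trans (Setoid.le_def.mp h h1) (t.trans (t.symm huv) (Setoid.le_def.mp h h2))

private lemma nc_mrg_add_one {s : Setoid Y} {u v : Y} (huv : ¬ s u v) :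
    nc (mrg s u v) + 1 = nc s := by
  classical
  set t := mrg s u v with ht
  set f : Quotient s → Quotient t := quotMap (le_mrg s u v) with hf
  have hfmk : ∀ a : Y, f (Quotient.mk s a) = Quotient.mk t a := fun a => rfl
  set g : {c : Quotient s // c ≠ Quotient.mk s v} → Quotient t := fun c => f c.1 with hg
  have hginj : Function.Injective g := by
    rintro ⟨c₁, hc₁⟩ ⟨c₂, hc₂⟩ hgeq
    obtain ⟨a, rfl⟩ := Quotient.exists_rep c₁
    obtain ⟨b, rfl⟩ := Quotient.exists_rep c₂
    simp only [hg, hfmk] at hgeq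
    have hab : (mrg s u v) a b := Quotient.exact hgeq
    have hav : ¬ s a v := fun h => hc₁ (Quotient.sound h)
    have hbv : ¬ s b v := fun h => hc₂ (Quotient.sound h)
    rcases hab with hab | ⟨h1, h2⟩ | ⟨h1, h2⟩
    · exact Subtype.ext (Quotient.sound hab)
    · exact absurd (s.symm h2) hbv
    · exact absurd h1 hav
  have hgsurj : Function.Surjective g := by
    intro d
    obtain ⟨a, rfl⟩ := Quotient.exists_rep d
    by_cases hav : s a v
    · refine ⟨⟨Quotient.mk s u, fun h => huv (Quotient.exact h)⟩, ?_⟩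
      show f (Quotient.mk s u) = Quotient.mk t a
      rw [hfmk]
      exact Quotient.sound (t.symm (Or.inr (Or.inr ⟨hav, s.refl u⟩)))
    · exact ⟨⟨Quotient.mk s a, fun h => hav (Quotient.exact h)⟩, rfl⟩
  have hcard : nc t = Nat.card {c : Quotient s // c ≠ Quotient.mk s v} :=
    (Nat.card_congr (Equiv.ofBijective g ⟨hginj, hgsurj⟩)).symm
  haveI : Fintype (Quotient s) := Fintype.ofFinite _
  have h1 : Nat.card {c : Quotient s // c ≠ Quotient.mk s v}
      = Fintype.card {c : Quotient s // c ≠ Quotient.mk s v} := Nat.card_eq_fintype_card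
  have h2 : nc s = Fintype.card (Quotient s) := Nat.card_eq_fintype_card
  rw [hcard, h1, h2, Fintype.card_subtype_compl, Fintype.card_subtype_eq]
  have : 1 ≤ Fintype.card (Quotient s) :=
    Fintype.card_pos_iff.mpr ⟨Quotient.mk s v⟩
  omega

private lemma nc_supermod_aux :
    ∀ n : ℕ, ∀ b x y : Setoid Y, nc b ≤ n → b ≤ x → b ≤ y →
      nc x + nc y ≤ nc b + nc (x ⊔ y) := by
  intro n
  induction n with
  | zero =>
    intro b x y hb _ _
    have : IsEmpty (Quotient b) := by
      rcases Nat.card_eq_zero.mp (Nat.le_zero.mp hb) with h | h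
      · exact h
      · exact absurd h (not_infinite_iff_finite.mpr inferInstance)
    have hY : IsEmpty Y := ⟨fun a => this.elim (Quotient.mk b a)⟩
    have hz : ∀ s : Setoid Y, nc s = 0 := fun s => Nat.card_eq_zero.mpr
      (Or.inl ⟨fun c => Quotient.inductionOn c fun a => hY.elim a⟩)
    simp [hz]
  | succ n ih =>
    intro b x y hb hbx hby
    by_cases hyb : y ≤ b
    · have hyeq : y = b := le_antisymm hyb hby
      rw [hyeq, sup_eq_left.mpr hbx]
      omega
    · have hex : ∃ u v, y u v ∧ ¬ b u v := by
        by_contra hcon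
        push_neg at hcon
        exact hyb (Setoid.le_def.mpr fun {u v} huv => hcon u v huv)
      obtain ⟨u, v, huv, hbuv⟩ := hex
      have hb'y : mrg b u v ≤ y := mrg_le hby huv
      have hb'card : nc (mrg b u v) + 1 = nc b := nc_mrg_add_one hbuv
      by_cases hxuv : x u v
      · have hb'x : mrg b u v ≤ x := mrg_le hbx hxuv
        have := ih (mrg b u v) x y (by omega) hb'x hb'y
        omega
      · have hxx' : x ≤ mrg x u v := le_mrg x u v
        have hb'x' : mrg b u v ≤ mrg x u v :=
          mrg_le (hbx.trans hxx') (mrg_rel_uv x u v)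
        have hx'card : nc (mrg x u v) + 1 = nc x := nc_mrg_add_one hxuv
        have hsup : mrg x u v ⊔ y = x ⊔ y := by
          refine le_antisymm (sup_le ?_ le_sup_right) (sup_le_sup_right hxx' y)
          exact mrg_le le_sup_left (Setoid.le_def.mp le_sup_right huv)
        have := ih (mrg b u v) (mrg x u v) y (by omega) hb'x' hb'y
        rw [hsup] at this
        omega

lemma nc_supermodular {b x y : Setoid Y} (hbx : b ≤ x) (hby : b ≤ y) :
    nc x + nc y ≤ nc b + nc (x ⊔ y) :=
  nc_supermod_aux (nc b) b x y le_rfl hbx hby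

lemma pdist_self (p : Setoid Y) : pdist p p = 0 := by
  unfold pdist
  rw [sup_idem]
  ring

lemma pdist_nonneg (p q : Setoid Y) : 0 ≤ pdist p q := by
  have h1 : nc (p ⊔ q) ≤ nc p := nc_anti le_sup_left
  have h2 : nc (p ⊔ q) ≤ nc q := nc_anti le_sup_right
  unfold pdist
  have c1 : (nc (p ⊔ q) : ℚ) ≤ nc p := by exact_mod_cast h1
  have c2 : (nc (p ⊔ q) : ℚ) ≤ nc q := by exact_mod_cast h2
  linarith

lemma eq_of_pdist_eq_zero {p q : Setoid Y} (h : pdist p q = 0) : p = q := by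
  have h1 : nc (p ⊔ q) ≤ nc p := nc_anti le_sup_left
  have h2 : nc (p ⊔ q) ≤ nc q := nc_anti le_sup_right
  unfold pdist at h
  have c1 : (nc (p ⊔ q) : ℚ) ≤ nc p := by exact_mod_cast h1
  have c2 : (nc (p ⊔ q) : ℚ) ≤ nc q := by exact_mod_cast h2
  have e1 : (nc p : ℚ) = nc (p ⊔ q) := by linarith
  have e2 : (nc q : ℚ) = nc (p ⊔ q) := by linarith
  have e1' : nc p ≤ nc (p ⊔ q) := by exact_mod_cast e1.le
  have e2' : nc q ≤ nc (p ⊔ q) := by exact_mod_cast e2.le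
  have hp : p = p ⊔ q := eq_of_le_of_nc_le le_sup_left e1'
  have hq : q = p ⊔ q := eq_of_le_of_nc_le le_sup_right e2'
  exact hp.trans hq.symm

lemma finite_setoid (Z : Type*) [Finite Z] : Finite (Setoid Z) :=
  Finite.of_injective (fun s : Setoid Z => s.r) fun s t h =>
    Setoid.ext fun a b => iff_of_eq (congrFun (congrFun h a) b)

end NcAux

lemma nc_idk (k : ℕ) : nc (idk k) = k := by
  have hsurj : Function.Surjective (Sum.elim id id : Fin k ⊕ Fin k → Fin k) :=
    fun x => ⟨Sum.inl x, rfl⟩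
  unfold nc idk
  rw [Nat.card_congr (Setoid.quotientKerEquivOfSurjective _ hsurj)]
  simp [Nat.card_eq_fintype_card]

/-- The integer exponent controlling the moment-cumulant expansion. -/
private def eInt {k : ℕ} (p p' : Pk k) : ℤ :=
  (nc (p ⊔ p') : ℤ) + nc (p' ⊔ idk k) - nc (p ⊔ idk k) - nc p'

private lemma eInt_nonpos {k : ℕ} (p p' : Pk k) : eInt p p' ≤ 0 := by
  have h := nc_supermodular (b := p') (x := p ⊔ p') (y := p' ⊔ idk k)
    le_sup_right le_sup_left
  have h2 : nc ((p ⊔ p') ⊔ (p' ⊔ idk k)) ≤ nc (p ⊔ idk k) := by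
    refine nc_anti (sup_le ?_ ?_)
    · exact le_sup_left.trans le_sup_left
    · exact le_sup_right.trans le_sup_right
  unfold eInt
  omega

private lemma eInt_self {k : ℕ} (p : Pk k) : eInt p p = 0 := by
  unfold eInt
  rw [sup_idem]
  ring

private lemma geoLE_iff_eInt {k : ℕ} (p p' : Pk k) :
    geoLE (idk k) p' p ↔ eInt p p' = 0 := by
  unfold geoLE pdist eInt
  rw [sup_comm (idk k) p', sup_comm (idk k) p, sup_comm p' p]
  constructor
  · intro h
    have : ((nc (p ⊔ p') : ℤ) + nc (p' ⊔ idk k) - nc (p ⊔ idk k) - nc p' : ℚ) = 0 := by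
      push_cast
      linarith
    exact_mod_cast this
  · intro h
    have : ((nc (p ⊔ p') : ℤ) + nc (p' ⊔ idk k) - nc (p ⊔ idk k) - nc p' : ℚ) = 0 := by
      exact_mod_cast h
    push_cast at this
    linarith

/-- The natural-number rank used for the induction along the geodesic order. -/
private def rk {k : ℕ} (p : Pk k) : ℕ := 2 * (k - nc (p ⊔ idk k)) + nc p

private lemma rk_lt {k : ℕ} {p p' : Pk k} (h : geoLE (idk k) p' p) (hne : p' ≠ p) :
    rk p' < rk p := by
  have hpos : 0 < pdist p' p :=
    lt_of_le_of_ne (pdist_nonneg _ _) fun h0 => hne (eq_of_pdist_eq_zero h0.symm)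
  have hlt : pdist (idk k) p' < pdist (idk k) p := by
    unfold geoLE at h
    linarith
  have hb1 : nc (p' ⊔ idk k) ≤ k := by
    have := nc_anti (le_sup_right : idk k ≤ p' ⊔ idk k)
    rwa [nc_idk] at this
  have hb2 : nc (p ⊔ idk k) ≤ k := by
    have := nc_anti (le_sup_right : idk k ≤ p ⊔ idk k)
    rwa [nc_idk] at this
  unfold pdist at hlt
  rw [sup_comm (idk k) p', sup_comm (idk k) p] at hlt
  have hq : ((nc p' : ℤ) - 2 * nc (p' ⊔ idk k) : ℚ) <
      ((nc p : ℤ) - 2 * nc (p ⊔ idk k) : ℚ) := by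
    push_cast
    linarith
  have hz : (nc p' : ℤ) - 2 * nc (p' ⊔ idk k) < (nc p : ℤ) - 2 * nc (p ⊔ idk k) := by
    exact_mod_cast hq
  unfold rk
  omega

private lemma tendsto_zpow_coe_nat {e : ℤ} (he : e ≤ 0) :
    Filter.Tendsto (fun N : ℕ => (N : ℂ) ^ e) Filter.atTop
      (nhds (if e = 0 then 1 else 0)) := by
  rcases he.lt_or_eq with hlt | rfl
  · rw [if_neg hlt.ne]
    rw [tendsto_zero_iff_norm_tendsto_zero]
    have hnorm : ∀ N : ℕ, ‖(N : ℂ) ^ e‖ = (N : ℝ) ^ e := by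
      intro N
      rw [norm_zpow, Complex.norm_natCast]
    simp only [hnorm]
    exact (tendsto_zpow_atTop_zero hlt).comp tendsto_natCast_atTop_atTop
  · simp only [if_pos rfl, zpow_zero]
    exact tendsto_const_nhds

/-- A sequence `E_N ∈ ℂ[P_k(N)]` (given by its coordinates) converges
in moments iff all its cumulants converge, and then `m_p(E) = ∑_{p' ≤ p} κ_{p'}(E)`,
the sum being over the geodesic order with base `id_k`. -/
theorem statement19 (k : ℕ) (hk : 0 < k) (E : ℕ → Pk k → ℂ) :
    ((∀ p : Pk k, ∃ L : ℂ, Filter.Tendsto (momentF E p) Filter.atTop (nhds L)) ↔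
      (∀ p : Pk k, ∃ L : ℂ, Filter.Tendsto (cumulantF E p) Filter.atTop (nhds L))) ∧
    ∀ mlim klim : Pk k → ℂ,
      (∀ p : Pk k, Filter.Tendsto (momentF E p) Filter.atTop (nhds (mlim p))) →
      (∀ p : Pk k, Filter.Tendsto (cumulantF E p) Filter.atTop (nhds (klim p))) →
      ∀ p : Pk k, mlim p = ∑ᶠ p' ∈ {p' : Pk k | geoLE (idk k) p' p}, klim p' := by
  classical
  haveI : Finite (Pk k) := finite_setoid _
  haveI : Fintype (Pk k) := Fintype.ofFinite _
  -- the limit matrix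
  set A' : Matrix (Pk k) (Pk k) ℂ :=
    Matrix.of fun p p' => if eInt p p' = 0 then 1 else 0 with hA'
  have hAlim : ∀ p p' : Pk k,
      Filter.Tendsto (fun N : ℕ => (N : ℂ) ^ eInt p p') Filter.atTop (nhds (A' p p')) :=
    fun p p' => tendsto_zpow_coe_nat (eInt_nonpos p p')
  -- the expansion of moments in terms of cumulants
  have hmom : ∀ (p : Pk k) (N : ℕ), 1 ≤ N →
      momentF E p N = ∑ p' : Pk k, (N : ℂ) ^ eInt p p' * cumulantF E p' N := by
    intro p N hN
    have hN0 : (N : ℂ) ≠ 0 := Nat.cast_ne_zero.mpr (by omega)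
    rw [momentF, finsum_eq_sum_of_fintype]
    refine Finset.sum_congr rfl fun p' _ => ?_
    rw [cumulantF, ← mul_assoc, ← zpow_add₀ hN0]
    have hexp : eInt p p' + ((nc p' : ℤ) - (nc (p' ⊔ idk k) : ℤ))
        = (nc (p ⊔ p') : ℤ) - (nc (p ⊔ idk k) : ℤ) := by
      unfold eInt
      ring
    rw [hexp, mul_comm]
  -- (ii) implies convergence of moments, with explicit limit
  have main2 : ∀ klim : Pk k → ℂ,
      (∀ p : Pk k, Filter.Tendsto (cumulantF E p) Filter.atTop (nhds (klim p))) →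
      ∀ p : Pk k, Filter.Tendsto (momentF E p) Filter.atTop
        (nhds (∑ p' : Pk k, A' p p' * klim p')) := by
    intro klim hkl p
    have h1 : Filter.Tendsto (fun N : ℕ => ∑ p' : Pk k, (N : ℂ) ^ eInt p p' * cumulantF E p' N)
        Filter.atTop (nhds (∑ p' : Pk k, A' p p' * klim p')) :=
      tendsto_finset_sum _ fun p' _ => (hAlim p p').mul (hkl p')
    refine h1.congr' ?_
    filter_upwards [Filter.eventually_ge_atTop 1] with N hN
    exact (hmom p N hN).symm
  -- the limit matrix is invertible
  have hdet : A'.det ≠ 0 := by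
    have hinj : Function.Injective A'.mulVec := by
      have hker : ∀ v : Pk k → ℂ, A'.mulVec v = 0 → v = 0 := by
        intro v hv
        have key : ∀ n : ℕ, ∀ q : Pk k, rk q < n → v q = 0 := by
          intro n
          induction n with
          | zero => exact fun q hq => absurd hq (Nat.not_lt_zero _)
          | succ n ih =>
            intro q hq
            have hrow : ∑ p' : Pk k, A' q p' * v p' = 0 := by
              have := congrFun hv q
              simpa [Matrix.mulVec, dotProduct] using this
            have hsum : ∑ p' : Pk k, A' q p' * v p' = v q := by
              rw [Finset.sum_eq_single q]
              · simp [hA', eInt_self]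
              · intro p' _ hne
                by_cases h0 : eInt q p' = 0
                · have hlt : rk p' < rk q :=
                    rk_lt ((geoLE_iff_eInt q p').mpr h0) hne
                  have : v p' = 0 := ih p' (by omega)
                  simp [this]
                · simp [hA', h0]
              · intro h
                exact absurd (Finset.mem_univ q) h
            rw [hsum] at hrow
            exact hrow
        funext q
        exact key (rk q + 1) q (Nat.lt_succ_self _)
      intro v w hvw
      have : A'.mulVec (v - w) = 0 := by
        rw [Matrix.mulVec_sub, hvw, sub_self]
      have := hker _ this
      exact sub_eq_zero.mp this
    have hu : IsUnit A' := Matrix.mulVec_injective_iff_isUnit.mp hinj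
    exact (Matrix.isUnit_iff_isUnit_det A').mp hu |>.ne_zero
  -- convergence of the matrices and of their inverses
  set A : ℕ → Matrix (Pk k) (Pk k) ℂ :=
    fun N => Matrix.of fun p p' => (N : ℂ) ^ eInt p p' with hA
  have hAt : Filter.Tendsto A Filter.atTop (nhds A') := by
    refine tendsto_pi_nhds.mpr ?_
    intro p
    refine tendsto_pi_nhds.mpr ?_
    intro p'
    exact hAlim p p'
  have hdetA : Filter.Tendsto (fun N => (A N).det) Filter.atTop (nhds A'.det) :=
    ((Continuous.matrix_det continuous_id).tendsto A').comp hAt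
  have hinvcont : ContinuousAt Ring.inverse A'.det := by
    rw [Ring.inverse_eq_inv']
    exact continuousAt_inv₀ hdet
  have hAinv : Filter.Tendsto (fun N => (A N)⁻¹) Filter.atTop (nhds A'⁻¹) :=
    ((continuousAt_matrix_inv A' hinvcont).tendsto).comp hAt
  have hAinvE : ∀ p q : Pk k,
      Filter.Tendsto (fun N => (A N)⁻¹ p q) Filter.atTop (nhds (A'⁻¹ p q)) := by
    intro p q
    have h1 := tendsto_pi_nhds.mp hAinv p
    exact tendsto_pi_nhds.mp h1 q
  have hev : ∀ᶠ N in Filter.atTop, (A N).det ≠ 0 := hdetA.eventually_ne hdet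
  -- the matrix identity between moments and cumulants
  have hMv : ∀ N : ℕ, 1 ≤ N →
      (fun p => momentF E p N) = (A N).mulVec (fun p' => cumulantF E p' N) := by
    intro N hN
    funext p
    rw [hmom p N hN]
    simp [Matrix.mulVec, dotProduct, hA]
  have hCv : ∀ N : ℕ, 1 ≤ N → (A N).det ≠ 0 →
      (fun p' => cumulantF E p' N) = (A N)⁻¹.mulVec (fun p => momentF E p N) := by
    intro N hN hNd
    rw [hMv N hN, Matrix.mulVec_mulVec, Matrix.nonsing_inv_mul _ (isUnit_iff_ne_zero.mpr hNd), Matrix.one_mulVec]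
  constructor
  · constructor
    · -- moments converge → cumulants converge
      intro hm p0
      choose mlim hmlim using hm
      have hlim : Filter.Tendsto
          (fun N => ∑ q : Pk k, (A N)⁻¹ p0 q * momentF E q N) Filter.atTop
          (nhds (∑ q : Pk k, A'⁻¹ p0 q * mlim q)) :=
        tendsto_finset_sum _ fun q _ => (hAinvE p0 q).mul (hmlim q)
      refine ⟨_, hlim.congr' ?_⟩
      filter_upwards [Filter.eventually_ge_atTop 1, hev] with N hN hNd
      have := congrFun (hCv N hN hNd) p0
      rw [this]
      simp [Matrix.mulVec, dotProduct]
    · -- cumulants converge → moments converge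
      intro hc p
      choose klim hklim using hc
      exact ⟨_, main2 klim hklim p⟩
  · -- the moment-cumulant formula in the limit
    intro mlim klim hm hkl p
    have h1 := main2 klim hkl p
    have h2 : mlim p = ∑ p' : Pk k, A' p p' * klim p' :=
      tendsto_nhds_unique (hm p) h1
    rw [h2]
    have hset : {p' : Pk k | geoLE (idk k) p' p}
        = ↑(Finset.univ.filter fun p' : Pk k => geoLE (idk k) p' p) := by
      ext p'
      simp
    rw [hset, finsum_mem_coe_finset]
    rw [Finset.sum_filter]
    refine Finset.sum_congr rfl fun p' _ => ?_
    by_cases hg : geoLE (idk k) p' p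
    · rw [if_pos hg, hA']
      rw [Matrix.of_apply, if_pos ((geoLE_iff_eInt p p').mp hg), one_mul]
    · rw [if_neg hg, hA']
      rw [Matrix.of_apply, if_neg (fun h0 => hg ((geoLE_iff_eInt p p').mpr h0)), zero_mul]

end PartitionPaper
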